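/- arXiv:1705.08102 — 3 statements merged into one kernel-verified Lean document; each statement's English description precedes it below -/
import Mathlib

section
/- For $0 < a < 1/2$ let $\beta(a)$ denote the unique zero of $\sigma \mapsto \zeta(\sigma,a)$ in the interval $(0,1)$. Then the function $\beta : (0,1/2) \to (0,1)$ is strictly decreasing: if $0 < a_1 < a_2 < 1/2$ then $\beta(a_1) > \beta(a_2)$. -/
open HurwitzZeta

/-!
For `0 < a < b ≤ 1` and `Re s > 0`, `ζ(s, a) - ζ(s, b) = ∑ₙ ((n + a)^(-s) - (n + b)^(-s))`: both
sides are holomorphic on the half-plane (the series converges locally uniformly by the mean value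
theorem) and agree for `Re s > 1`. For real `σ > 0` every term is positive, so
`ζ(β(a₂), a₁) > ζ(β(a₂), a₂) = 0`. As `ζ(σ, a₁)` is real and tends to `-∞` as `σ → 1⁻`, it
vanishes somewhere in `(β(a₂), 1)`, and by uniqueness that zero is `β(a₁)`.
-/

open Complex ComplexConjugate Filter Topology Set

lemma Real.rpow_le_rpow_add_rpow {t p q r : ℝ} (ht : 0 < t) (hqp : q ≤ p) (hpr : p ≤ r) :
    t ^ p ≤ t ^ q + t ^ r := by
  rcases le_or_gt 1 t with h | h
  · linarith [Real.rpow_le_rpow_of_exponent_le h hpr, Real.rpow_nonneg ht.le q]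
  · linarith [Real.rpow_le_rpow_of_exponent_ge ht h.le hqp, Real.rpow_nonneg ht.le r]

lemma Real.summable_nat_add_rpow {a p : ℝ} (ha : 0 < a) (hp : p < -1) :
    Summable fun n : ℕ ↦ ((n : ℝ) + a) ^ p := by
  refine ((Real.summable_one_div_nat_add_rpow a (-p)).mpr (by linarith)).congr fun n ↦ ?_
  have hpos : (0 : ℝ) < n + a := by positivity
  rw [abs_of_pos hpos, Real.rpow_neg hpos.le, one_div, inv_inv]

lemma norm_ofReal_cpow_neg_sub_le {x y : ℝ} (hx : 0 < x) (hxy : x ≤ y) {w : ℂ}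
    (hw : -1 ≤ w.re) :
    ‖(x : ℂ) ^ (-w) - (y : ℂ) ^ (-w)‖ ≤ ‖w‖ * x ^ (-w.re - 1) * (y - x) := by
  have hderiv (t : ℝ) (ht : t ∈ Icc x y) :
      HasDerivWithinAt (fun t : ℝ ↦ (t : ℂ) ^ (-w)) (-w * (t : ℂ) ^ (-w - 1)) (Icc x y) t := by
    have := (hasDerivAt_id (t : ℂ)).cpow_const (c := -w) (Or.inl (mod_cast hx.trans_le ht.1))
    simpa using this.comp_ofReal.hasDerivWithinAt
  have hbound (t : ℝ) (ht : t ∈ Icc x y) :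
      ‖-w * (t : ℂ) ^ (-w - 1)‖ ≤ ‖w‖ * x ^ (-w.re - 1) := by
    rw [norm_mul, norm_neg, norm_cpow_eq_rpow_re_of_pos (hx.trans_le ht.1)]
    simp only [sub_re, neg_re, one_re]
    exact mul_le_mul_of_nonneg_left (Real.rpow_le_rpow_of_nonpos hx ht.1 (by linarith))
      (norm_nonneg w)
  have := (convex_Icc x y).norm_image_sub_le_of_norm_hasDerivWithin_le hderiv hbound
    (left_mem_Icc.mpr hxy) (right_mem_Icc.mpr hxy)
  rwa [norm_sub_rev, Real.norm_of_nonneg (sub_nonneg.mpr hxy)] at this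

section HurwitzDifference

variable {a b : ℝ}

lemma norm_one_div_cpow_sub_one_div_cpow_le (ha : 0 < a) (hab : a ≤ b) (n : ℕ) {w : ℂ}
    {ε R : ℝ} (hε : -1 ≤ ε) (hεw : ε ≤ w.re) (hwR : ‖w‖ ≤ R) :
    ‖1 / ((n : ℂ) + a) ^ w - 1 / ((n : ℂ) + b) ^ w‖ ≤
      R * (b - a) * (((n : ℝ) + a) ^ (-R - 1) + ((n : ℝ) + a) ^ (-ε - 1)) := by
  have hna : (0 : ℝ) < n + a := by positivity
  have hwR' : w.re ≤ R := (re_le_norm w).trans hwR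
  simp only [one_div, ← cpow_neg]
  push_cast [← ofReal_natCast, ← ofReal_add]
  calc _ ≤ ‖w‖ * ((n : ℝ) + a) ^ (-w.re - 1) * ((n + b) - (n + a)) :=
        norm_ofReal_cpow_neg_sub_le hna (by linarith) (by linarith)
    _ ≤ R * (((n : ℝ) + a) ^ (-R - 1) + ((n : ℝ) + a) ^ (-ε - 1)) * ((n + b) - (n + a)) := by
        refine mul_le_mul_of_nonneg_right (mul_le_mul hwR ?_ (by positivity)
          ((norm_nonneg w).trans hwR)) (by linarith)
        exact Real.rpow_le_rpow_add_rpow hna (by linarith) (by linarith)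
    _ = _ := by ring

lemma differentiableOn_tsum_one_div_cpow_sub_one_div_cpow (ha : 0 < a) (hab : a ≤ b) :
    DifferentiableOn ℂ (fun s : ℂ ↦ ∑' n : ℕ, (1 / ((n : ℂ) + a) ^ s - 1 / ((n : ℂ) + b) ^ s))
      {s | 0 < s.re} := by
  intro z hz
  rw [mem_ofPred_eq] at hz
  set V : Set ℂ := {w | z.re / 2 < w.re ∧ ‖w‖ < ‖z‖ + 1}
  have hV : IsOpen V := (isOpen_lt continuous_const continuous_re).inter
    (isOpen_lt continuous_norm continuous_const)
  have hdiff (n : ℕ) (c : ℝ) (hc : 0 < c) :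
      Differentiable ℂ fun s : ℂ ↦ 1 / ((n : ℂ) + c) ^ s := by
    have : (n : ℂ) + c ≠ 0 := by exact_mod_cast (by positivity : (0 : ℝ) < n + c).ne'
    simpa only [one_div, ← cpow_neg] using differentiable_neg.const_cpow (Or.inl this)
  have hsum := differentiableOn_tsum_of_summable_norm
    (((Real.summable_nat_add_rpow ha (by linarith [norm_nonneg z] : -(‖z‖ + 1) - 1 < -1)).add
      (Real.summable_nat_add_rpow ha (by linarith : -(z.re / 2) - 1 < -1))).mul_left
        ((‖z‖ + 1) * (b - a)))
    (fun n ↦ ((hdiff n a ha).sub (hdiff n b (ha.trans_le hab))).differentiableOn) hV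
    fun n w hw ↦ norm_one_div_cpow_sub_one_div_cpow_le ha hab n (by linarith) hw.1.le hw.2.le
  exact (hsum.differentiableAt (hV.mem_nhds ⟨by linarith, by linarith⟩)).differentiableWithinAt

lemma hasSum_hurwitzZeta_sub_hurwitzZeta (ha : 0 < a) (hab : a ≤ b) (hb : b ≤ 1) {s : ℂ}
    (hs : 0 < s.re) :
    HasSum (fun n : ℕ ↦ 1 / ((n : ℂ) + a) ^ s - 1 / ((n : ℂ) + b) ^ s)
      (hurwitzZeta a s - hurwitzZeta b s) := by
  have hsum : Summable fun n : ℕ ↦ 1 / ((n : ℂ) + a) ^ s - 1 / ((n : ℂ) + b) ^ s :=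
    .of_norm_bounded
      (((Real.summable_nat_add_rpow ha (by linarith [re_le_norm s] : -‖s‖ - 1 < -1)).add
        (Real.summable_nat_add_rpow ha (by linarith : -s.re - 1 < -1))).mul_left (‖s‖ * (b - a)))
      fun n ↦ norm_one_div_cpow_sub_one_div_cpow_le ha hab n (by linarith) le_rfl le_rfl
  have hUopen : IsOpen {s : ℂ | 0 < s.re} := isOpen_lt continuous_const continuous_re
  have heq : EqOn (fun s ↦ hurwitzZeta a s - hurwitzZeta b s)
      (fun s : ℂ ↦ ∑' n : ℕ, (1 / ((n : ℂ) + a) ^ s - 1 / ((n : ℂ) + b) ^ s)) {s | 0 < s.re} :=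
    ((differentiable_hurwitzZeta_sub_hurwitzZeta a b).differentiableOn.analyticOnNhd hUopen
      ).eqOn_of_preconnected_of_eventuallyEq
      ((differentiableOn_tsum_one_div_cpow_sub_one_div_cpow ha hab).analyticOnNhd hUopen)
      (convex_halfSpace_re_gt 0).isPreconnected (by norm_num : (0 : ℝ) < re 2)
      (eventuallyEq_of_mem ((isOpen_lt continuous_const continuous_re).mem_nhds
        (by norm_num : (1 : ℝ) < re 2)) fun w (hw : 1 < w.re) ↦
          (((hasSum_hurwitzZeta_of_one_lt_re ⟨ha.le, hab.trans hb⟩ hw).sub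
            (hasSum_hurwitzZeta_of_one_lt_re ⟨ha.le.trans hab, hb⟩ hw)).tsum_eq).symm)
  exact hsum.hasSum_iff.mpr (heq hs).symm

lemma re_hurwitzZeta_lt_re_hurwitzZeta (ha : 0 < a) (hab : a < b) (hb : b ≤ 1) {σ : ℝ}
    (hσ : 0 < σ) : (hurwitzZeta b σ).re < (hurwitzZeta a σ).re := by
  have hre (c : ℝ) (hc : 0 ≤ c) (n : ℕ) :
      (1 / ((n : ℂ) + c) ^ (σ : ℂ)).re = 1 / ((n : ℝ) + c) ^ σ := by
    rw [← ofReal_natCast, ← ofReal_add, ← ofReal_cpow (by positivity), ← ofReal_one,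
      ← ofReal_div, ofReal_re]
  have hpos (n : ℕ) : 0 < 1 / ((n : ℝ) + a) ^ σ - 1 / ((n : ℝ) + b) ^ σ :=
    sub_pos.mpr (one_div_lt_one_div_of_lt (by positivity)
      (Real.rpow_lt_rpow (by positivity) (by linarith) hσ))
  have hsum := hasSum_re (hasSum_hurwitzZeta_sub_hurwitzZeta ha hab.le hb (s := σ) (by simpa))
  simp only [sub_re, hre a ha.le, hre b (ha.trans hab).le] at hsum
  linarith [hasSum_lt (fun n ↦ (hpos n).le) (hpos 0) hasSum_zero hsum]

end HurwitzDifference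

lemma hurwitzZeta_conj (a : UnitAddCircle) {s : ℂ} (hs : s ≠ 1) :
    hurwitzZeta a (conj s) = conj (hurwitzZeta a s) := by
  obtain ⟨x, rfl⟩ := QuotientAddGroup.mk_surjective a
  have hx : Int.fract x ∈ Icc (0 : ℝ) 1 := ⟨Int.fract_nonneg x, (Int.fract_lt_one x).le⟩
  rw [← AddCircle.coe_fract x]
  generalize Int.fract x = b at hx ⊢
  have hg_an : AnalyticOnNhd ℂ (fun z ↦ conj (hurwitzZeta b (conj z))) {1}ᶜ :=
    DifferentiableOn.analyticOnNhd
      (fun z hz ↦ (differentiableAt_conj_conj_iff.mpr <| differentiableAt_hurwitzZeta _ <|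
        (map_ne_one_iff _ (starRingEnd ℂ).injective).mpr hz).differentiableWithinAt)
      isOpen_compl_singleton
  have hf_an : AnalyticOnNhd ℂ (hurwitzZeta b) {1}ᶜ :=
    DifferentiableOn.analyticOnNhd
      (fun z hz ↦ (differentiableAt_hurwitzZeta _ hz).differentiableWithinAt)
      isOpen_compl_singleton
  have hgz (z : ℂ) (hz : 1 < z.re) : conj (hurwitzZeta b (conj z)) = hurwitzZeta b z := by
    rw [(hasSum_hurwitzZeta_of_one_lt_re hx (by rwa [conj_re])).tsum_eq.symm, conj_tsum,
      (hasSum_hurwitzZeta_of_one_lt_re hx hz).tsum_eq.symm]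
    refine tsum_congr fun n ↦ ?_
    rw [map_div₀, map_one, ← conj_cpow _ _ ?_]
    · simp
    · rw [← ofReal_natCast, ← ofReal_add, arg_ofReal_of_nonneg (add_nonneg n.cast_nonneg hx.1)]
      exact Real.pi_pos.ne
  have heq : EqOn (fun z ↦ conj (hurwitzZeta b (conj z))) (hurwitzZeta b) {1}ᶜ :=
    hg_an.eqOn_of_preconnected_of_eventuallyEq hf_an
      (isConnected_compl_singleton_of_one_lt_rank (by simp) 1).isPreconnected
      (by norm_num : (2 : ℂ) ∈ _)
      (eventuallyEq_of_mem
        ((isOpen_lt continuous_const continuous_re).mem_nhds (by norm_num)) hgz)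
  simpa using congrArg (starRingEnd ℂ) (heq hs)

lemma ofReal_re_hurwitzZeta (a : UnitAddCircle) {σ : ℝ} (hσ : σ ≠ 1) :
    ((hurwitzZeta a σ).re : ℂ) = hurwitzZeta a σ := by
  rw [← conj_eq_iff_re, ← hurwitzZeta_conj a (mod_cast hσ), conj_ofReal]

lemma eventually_re_hurwitzZeta_neg (a : UnitAddCircle) :
    ∀ᶠ σ : ℝ in 𝓝[<] 1, (hurwitzZeta a σ).re < 0 := by
  have hσ : Tendsto (fun σ : ℝ ↦ (σ : ℂ)) (𝓝[<] 1) (𝓝[≠] 1) :=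
    tendsto_nhdsWithin_of_tendsto_nhds_of_eventually_within _
      (continuous_ofReal.tendsto' 1 1 ofReal_one |>.mono_left nhdsWithin_le_nhds)
      (eventually_nhdsWithin_of_forall fun σ (hσ : σ < 1) ↦
        mem_compl_singleton_iff.mpr (mod_cast hσ.ne))
  have hres := (continuous_re.tendsto 1).comp ((hurwitzZeta_residue_one a).comp hσ)
  filter_upwards [hres.eventually (lt_mem_nhds (by simp : (0 : ℝ) < re 1)),
    self_mem_nhdsWithin] with σ hpos (hlt : σ < 1)
  rw [Function.comp_apply, Function.comp_apply, ← ofReal_one, ← ofReal_sub, re_ofReal_mul] at hpos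
  nlinarith

lemma exists_hurwitzZeta_eq_zero_of_re_pos {a : UnitAddCircle} {σ₀ : ℝ} (h₀ : σ₀ < 1)
    (hpos : 0 < (hurwitzZeta a σ₀).re) : ∃ σ ∈ Ioo σ₀ 1, hurwitzZeta a σ = 0 := by
  obtain ⟨σ₁, hneg, hσ₁⟩ := ((eventually_re_hurwitzZeta_neg a).and (Ioo_mem_nhdsLT h₀)).exists
  have hcont : ContinuousOn (fun σ : ℝ ↦ (hurwitzZeta a σ).re) (Icc σ₀ σ₁) := fun σ hσ ↦
    (continuous_re.continuousAt.comp ((differentiableAt_hurwitzZeta a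
      (mod_cast (hσ.2.trans_lt hσ₁.2).ne : (σ : ℂ) ≠ 1)).continuousAt.comp
        continuous_ofReal.continuousAt)).continuousWithinAt
  obtain ⟨σ, hσ, hzero⟩ := intermediate_value_Ioo' hσ₁.1.le hcont ⟨hneg, hpos⟩
  refine ⟨σ, ⟨hσ.1, hσ.2.trans hσ₁.2⟩, ?_⟩
  rw [← ofReal_re_hurwitzZeta a (hσ.2.trans hσ₁.2).ne]
  exact congrArg ofReal hzero

/-- If `β : (0,1/2) → (0,1)` assigns to each `a` the unique zero of `σ ↦ ζ(σ, a)` in `(0,1)`,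
then `β` is strictly decreasing: `0 < a₁ < a₂ < 1/2` implies `β a₁ > β a₂`. -/
theorem hurwitzZeta_real_zero_strictAnti (β : ℝ → ℝ)
    (hβ : ∀ a ∈ Set.Ioo (0 : ℝ) (1 / 2),
      β a ∈ Set.Ioo (0 : ℝ) 1 ∧ hurwitzZeta (a : UnitAddCircle) (β a : ℂ) = 0 ∧
        ∀ σ ∈ Set.Ioo (0 : ℝ) 1, hurwitzZeta (a : UnitAddCircle) (σ : ℂ) = 0 → σ = β a) :
    ∀ a₁ a₂ : ℝ, 0 < a₁ → a₁ < a₂ → a₂ < 1 / 2 → β a₂ < β a₁ := by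
  intro a₁ a₂ ha₁ h₁₂ ha₂
  obtain ⟨⟨hβ₂_pos, hβ₂_lt_one⟩, hζ₂, -⟩ := hβ a₂ ⟨ha₁.trans h₁₂, ha₂⟩
  obtain ⟨-, -, hβ₁_unique⟩ := hβ a₁ ⟨ha₁, h₁₂.trans ha₂⟩
  have hpos : 0 < (hurwitzZeta a₁ (β a₂)).re := by
    simpa [hζ₂] using re_hurwitzZeta_lt_re_hurwitzZeta ha₁ h₁₂ (by linarith) hβ₂_pos
  obtain ⟨σ, hσ, hζσ⟩ := exists_hurwitzZeta_eq_zero_of_re_pos hβ₂_lt_one hpos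
  rw [← hβ₁_unique σ ⟨hβ₂_pos.trans hσ.1, hσ.2⟩ hζσ]
  exact hσ.1
end

section
/- For every real $a$ with $0 < a < 1/2$, the function $h(a,x) = x e^{(1-a)x} - e^x + 1$ of $x > 0$ has exactly one positive zero $x_0$; moreover $h(a,x) > 0$ for $0 < x < x_0$ and $h(a,x) < 0$ for $x > x_0$. -/
/-- The function `h(a,x) = x e^{(1-a)x} - e^x + 1`. -/
noncomputable def h (a x : ℝ) : ℝ := x * Real.exp ((1 - a) * x) - Real.exp x + 1

/-!
Dividing by `e^{(1-a)x}` turns `h(a,x)` into `F(x) = x + e^{-(1-a)x} - e^{ax}`, with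
`F(0) = F'(0) = 0`.
The second derivative `(1-a)^2 e^{-(1-a)x} - a^2 e^{ax}` changes sign exactly once, at
`x = log ((1-a)^2 / a^2)`, which is positive because `a < 1 - a`. A function vanishing at `0`
whose derivative is positive and then negative, and which is eventually negative, is itself
positive and then negative; applying this first to `F'` and then to `F` gives the sign pattern
of `F`, hence of `h`.
-/

open Real Set

def PosThenNegAt (f : ℝ → ℝ) (c : ℝ) : Prop :=
  (∀ x, 0 < x → x < c → 0 < f x) ∧ ∀ x, c < x → f x < 0

namespace PosThenNegAt

variable {f : ℝ → ℝ} {c : ℝ}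

theorem eq_of_eq_zero (hf : PosThenNegAt f c) {y : ℝ} (hy : 0 < y) (hfy : f y = 0) : y = c := by
  rcases lt_trichotomy y c with hlt | heq | hgt
  · exact absurd hfy (hf.1 y hy hlt).ne'
  · exact heq
  · exact absurd hfy (hf.2 y hgt).ne

theorem pos_mul (hf : PosThenNegAt f c) {g : ℝ → ℝ} (hg : ∀ x, 0 < g x) :
    PosThenNegAt (fun x => g x * f x) c :=
  ⟨fun x hx hxc => mul_pos (hg x) (hf.1 x hx hxc),
    fun x hx => mul_neg_of_pos_of_neg (hg x) (hf.2 x hx)⟩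

end PosThenNegAt

theorem exists_posThenNegAt_of_hasDerivAt {f f' : ℝ → ℝ} {c : ℝ}
    (hf : ∀ x, HasDerivAt f (f' x) x) (hf0 : f 0 = 0) (hc : 0 < c) (hf' : PosThenNegAt f' c)
    (hneg : ∃ X, 0 < X ∧ f X < 0) :
    ∃ x₀, c < x₀ ∧ f x₀ = 0 ∧ PosThenNegAt f x₀ := by
  have hcont : Continuous f := continuous_iff_continuousAt.2 fun x => (hf x).continuousAt
  have hmono : StrictMonoOn f (Icc 0 c) :=
    strictMonoOn_of_deriv_pos (convex_Icc 0 c) hcont.continuousOn fun x hx => by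
      rw [interior_Icc] at hx
      rw [(hf x).deriv]
      exact hf'.1 x hx.1 hx.2
  have hanti : StrictAntiOn f (Ici c) :=
    strictAntiOn_of_deriv_neg (convex_Ici c) hcont.continuousOn fun x hx => by
      rw [interior_Ici] at hx
      rw [(hf x).deriv]
      exact hf'.2 x hx
  have hpos : ∀ x, 0 < x → x ≤ c → 0 < f x := fun x hx hxc =>
    hf0 ▸ hmono ⟨le_rfl, hc.le⟩ ⟨hx.le, hxc⟩ hx
  obtain ⟨X, hX, hfX⟩ := hneg
  have hcX : c < X := lt_of_not_ge fun hXc => (hpos X hX hXc).not_gt hfX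
  obtain ⟨x₀, ⟨hcx₀, -⟩, hfx₀⟩ :=
    intermediate_value_Ioo' hcX.le hcont.continuousOn ⟨hfX, hpos c hc le_rfl⟩
  refine ⟨x₀, hcx₀, hfx₀, fun x hx hxx₀ => ?_, fun x hx => ?_⟩
  · rcases le_or_gt x c with hxc | hxc
    · exact hpos x hx hxc
    · exact hfx₀ ▸ hanti hxc.le (hxc.trans hxx₀).le hxx₀
  · exact hfx₀ ▸ hanti hcx₀.le (hcx₀.trans hx).le hx

noncomputable def damped (a x : ℝ) : ℝ := x + exp (-(1 - a) * x) - exp (a * x)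

noncomputable def dampedDeriv (a x : ℝ) : ℝ :=
  1 - (1 - a) * exp (-(1 - a) * x) - a * exp (a * x)

theorem h_eq_exp_mul_damped (a x : ℝ) : h a x = exp ((1 - a) * x) * damped a x := by
  have e₁ : exp ((1 - a) * x) * exp (-(1 - a) * x) = 1 := by
    rw [← exp_add, neg_mul, add_neg_cancel, exp_zero]
  have e₂ : exp ((1 - a) * x) * exp (a * x) = exp x := by rw [← exp_add]; ring_nf
  rw [h, damped]
  linear_combination e₂ - e₁

theorem hasDerivAt_exp_const_mul (r x : ℝ) :
    HasDerivAt (fun x => exp (r * x)) (r * exp (r * x)) x := by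
  simpa [mul_comm] using ((hasDerivAt_id x).const_mul r).exp

theorem hasDerivAt_damped (a x : ℝ) : HasDerivAt (damped a) (dampedDeriv a x) x :=
  (((hasDerivAt_id' x).add (hasDerivAt_exp_const_mul (-(1 - a)) x)).sub
    (hasDerivAt_exp_const_mul a x)).congr_deriv (by rw [dampedDeriv]; ring)

theorem hasDerivAt_dampedDeriv (a x : ℝ) :
    HasDerivAt (dampedDeriv a) ((1 - a) ^ 2 * exp (-(1 - a) * x) - a ^ 2 * exp (a * x)) x :=
  ((((hasDerivAt_exp_const_mul (-(1 - a)) x).const_mul (1 - a)).const_sub 1).sub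
    ((hasDerivAt_exp_const_mul a x).const_mul a)).congr_deriv (by ring)

theorem damped_zero (a : ℝ) : damped a 0 = 0 := by simp [damped]

theorem dampedDeriv_zero (a : ℝ) : dampedDeriv a 0 = 0 := by simp [dampedDeriv]

theorem posThenNegAt_deriv_dampedDeriv {a : ℝ} (ha : 0 < a) (ha1 : a < 1) :
    PosThenNegAt (fun x => (1 - a) ^ 2 * exp (-(1 - a) * x) - a ^ 2 * exp (a * x))
      (log ((1 - a) ^ 2 / a ^ 2)) := by
  have hfactor : ∀ x, (1 - a) ^ 2 * exp (-(1 - a) * x) - a ^ 2 * exp (a * x)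
      = exp (-(1 - a) * x) * ((1 - a) ^ 2 - a ^ 2 * exp x) := fun x => by
    rw [show exp (a * x) = exp x * exp (-(1 - a) * x) by rw [← exp_add]; ring_nf]
    ring
  have ha2 : 0 < a ^ 2 := by positivity
  have hratio : 0 < (1 - a) ^ 2 / a ^ 2 := div_pos (pow_pos (sub_pos.2 ha1) 2) ha2
  refine ⟨fun x _ hx => ?_, fun x hx => ?_⟩ <;> simp only [hfactor]
  · refine mul_pos (exp_pos _) (sub_pos.2 ?_)
    rw [← lt_div_iff₀' ha2]
    exact (lt_log_iff_exp_lt hratio).1 hx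
  · refine mul_neg_of_pos_of_neg (exp_pos _) (sub_neg.2 ?_)
    rw [← div_lt_iff₀' ha2]
    exact (log_lt_iff_lt_exp hratio).1 hx

theorem dampedDeriv_inv_sq_neg {a : ℝ} (ha : 0 < a) (ha1 : a ≤ 1) :
    dampedDeriv a (1 / a ^ 2) < 0 := by
  set X := 1 / a ^ 2 with hX
  have haX : a * (a * X) = 1 := by rw [hX]; field_simp
  have hexp : a * (a * X + 1) ≤ a * exp (a * X) := by gcongr; exact add_one_le_exp _
  have hnonneg : 0 ≤ (1 - a) * exp (-(1 - a) * X) := mul_nonneg (by linarith) (exp_pos _).le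
  rw [dampedDeriv]
  nlinarith

theorem damped_two_div_sq_neg {a : ℝ} (ha : 0 < a) (ha1 : a ≤ 1) :
    damped a (2 / a ^ 2) < 0 := by
  set X := 2 / a ^ 2 with hX
  have hX0 : 0 < X := by positivity
  have hle : exp (-(1 - a) * X) ≤ 1 := exp_le_one_iff.2 (by nlinarith)
  have hquad := quadratic_le_exp_of_nonneg (mul_pos ha hX0).le
  have haX : (a * X) ^ 2 / 2 = X := by rw [hX]; field_simp
  rw [damped]
  nlinarith

/-- For `0 < a < 1/2`, the function `x ↦ h(a,x)` has exactly one positive zero `x₀`; moreover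
`h(a,x) > 0` for `0 < x < x₀` and `h(a,x) < 0` for `x > x₀`. -/
theorem h_exactly_one_positive_zero (a : ℝ) (ha : 0 < a) (ha' : a < 1 / 2) :
    ∃ x₀ : ℝ, 0 < x₀ ∧ h a x₀ = 0 ∧
      (∀ x : ℝ, 0 < x → x < x₀ → 0 < h a x) ∧
      (∀ x : ℝ, x₀ < x → h a x < 0) ∧
      (∀ y : ℝ, 0 < y → h a y = 0 → y = x₀) := by
  have ha1 : a < 1 := by linarith
  have hc : 0 < log ((1 - a) ^ 2 / a ^ 2) :=
    log_pos ((one_lt_div (by positivity)).2 (by nlinarith))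
  obtain ⟨m, hm, -, hG⟩ := exists_posThenNegAt_of_hasDerivAt (hasDerivAt_dampedDeriv a)
    (dampedDeriv_zero a) hc (posThenNegAt_deriv_dampedDeriv ha ha1)
    ⟨1 / a ^ 2, by positivity, dampedDeriv_inv_sq_neg ha ha1.le⟩
  obtain ⟨x₀, hx₀, hF0, hF⟩ := exists_posThenNegAt_of_hasDerivAt (hasDerivAt_damped a)
    (damped_zero a) (hc.trans hm) hG ⟨2 / a ^ 2, by positivity, damped_two_div_sq_neg ha ha1.le⟩
  have hh : PosThenNegAt (h a) x₀ := by
    simpa only [← h_eq_exp_mul_damped] using hF.pos_mul fun x => exp_pos ((1 - a) * x)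
  refine ⟨x₀, (hc.trans hm).trans hx₀, ?_, hh.1, hh.2, fun _ => hh.eq_of_eq_zero⟩
  rw [h_eq_exp_mul_damped, hF0, mul_zero]
end

section
/- Fix a real number $\sigma$ with $0 < \sigma < 1$. Then $\int_0^{\infty} H(a,x)\, x^{\sigma-1}\, dx \to +\infty$ as $a \to 0^+$. -/
/-!
Since `e^{(1-a)x}/(e^x-1) = e^{-ax} · e^x/(e^x-1)` and `max(1, 1/x) ≤ e^x/(e^x-1) ≤ 1 + 1/x`,
for `0 ≤ a ≤ 1` and `x > 0` we get `e^{-ax} - 2 min(1, 1/x) ≤ H(a,x) ≤ e^{-ax}`.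
The error term is integrable against `x^{σ-1}` on `(0,∞)` uniformly in `a`, while
`∫₀^∞ e^{-ax} x^{σ-1} dx = Γ(σ) a^{-σ} → ∞` as `a → 0⁺`.
-/

open Filter

/-- The kernel `H(a,x) = e^{(1-a)x}/(e^x - 1) - 1/x`. -/
noncomputable def H (a x : ℝ) : ℝ := Real.exp ((1 - a) * x) / (Real.exp x - 1) - 1 / x

open Real MeasureTheory Set

section Bounds

variable {x : ℝ}

lemma one_le_exp_div_exp_sub_one (hx : 0 < x) : 1 ≤ exp x / (exp x - 1) := by
  have : 0 < exp x - 1 := sub_pos.2 (one_lt_exp_iff.2 hx)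
  rw [le_div_iff₀ this]
  linarith

lemma inv_le_exp_div_exp_sub_one (hx : 0 < x) : x⁻¹ ≤ exp x / (exp x - 1) := by
  have : 0 < exp x - 1 := sub_pos.2 (one_lt_exp_iff.2 hx)
  rw [inv_eq_one_div, div_le_div_iff₀ hx this]
  have h := mul_le_mul_of_nonneg_right (add_one_le_exp (-x)) (exp_pos x).le
  rw [← exp_add, neg_add_cancel, exp_zero] at h
  linarith

lemma exp_div_exp_sub_one_le (hx : 0 < x) : exp x / (exp x - 1) ≤ 1 + x⁻¹ := by
  have : 0 < exp x - 1 := sub_pos.2 (one_lt_exp_iff.2 hx)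
  have h : 1 ≤ (exp x - 1) / x := (one_le_div hx).2 (by linarith [add_one_le_exp x])
  rw [div_le_iff₀ this, add_mul, one_mul, inv_mul_eq_div]
  linarith

lemma H_eq_exp_neg_mul (a x : ℝ) : H a x = exp (-(a * x)) * (exp x / (exp x - 1)) - x⁻¹ := by
  rw [H, mul_div_assoc', ← exp_add, one_div]
  ring_nf

lemma H_le_exp_neg_mul {a : ℝ} (ha : 0 ≤ a) (hx : 0 < x) : H a x ≤ exp (-(a * x)) := by
  have he : exp (-(a * x)) ≤ 1 := exp_le_one_iff.2 (by nlinarith)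
  have h1 := mul_le_mul_of_nonneg_left (exp_div_exp_sub_one_le hx) (exp_pos (-(a * x))).le
  have h2 : (exp (-(a * x)) - 1) * x⁻¹ ≤ 0 :=
    mul_nonpos_of_nonpos_of_nonneg (by linarith) (inv_nonneg.2 hx.le)
  rw [H_eq_exp_neg_mul]
  linarith

lemma exp_neg_mul_sub_inv_le_H (a : ℝ) (hx : 0 < x) : exp (-(a * x)) - x⁻¹ ≤ H a x := by
  have := mul_le_mul_of_nonneg_left (one_le_exp_div_exp_sub_one hx) (exp_pos (-(a * x))).le
  rw [H_eq_exp_neg_mul]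
  linarith

lemma neg_le_H (a : ℝ) (hx : 0 < x) : -a ≤ H a x := by
  have h1 := mul_le_mul_of_nonneg_left (inv_le_exp_div_exp_sub_one hx) (exp_pos (-(a * x))).le
  have h2 : -(a * x) * x⁻¹ ≤ (exp (-(a * x)) - 1) * x⁻¹ :=
    mul_le_mul_of_nonneg_right (by linarith [add_one_le_exp (-(a * x))]) (inv_nonneg.2 hx.le)
  rw [neg_mul, mul_assoc, mul_inv_cancel₀ hx.ne', mul_one] at h2
  rw [H_eq_exp_neg_mul]
  linarith

lemma exp_neg_mul_sub_le_H {a : ℝ} (ha : 0 ≤ a) (ha' : a ≤ 1) (hx : 0 < x) :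
    exp (-(a * x)) - 2 * min 1 x⁻¹ ≤ H a x := by
  have he : exp (-(a * x)) ≤ 1 := exp_le_one_iff.2 (by nlinarith)
  rw [mul_min_of_nonneg _ _ zero_le_two, sub_le_comm, le_min_iff]
  constructor
  · linarith [neg_le_H a hx]
  · linarith [exp_neg_mul_sub_inv_le_H a hx, inv_nonneg.2 hx.le]

end Bounds

lemma integrableOn_min_one_inv_mul_rpow {σ : ℝ} (hσ : 0 < σ) (hσ' : σ < 1) :
    IntegrableOn (fun x : ℝ => min 1 x⁻¹ * x ^ (σ - 1)) (Ioi 0) := by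
  rw [← Ioc_union_Ioi_eq_Ioi zero_le_one]
  refine IntegrableOn.union ?_ ?_
  · refine ((intervalIntegrable_iff_integrableOn_Ioc_of_le zero_le_one).1
      (intervalIntegral.intervalIntegrable_rpow' (r := σ - 1) (by linarith))).congr_fun
      (fun x hx => ?_) measurableSet_Ioc
    rw [min_eq_left ((one_le_inv₀ hx.1).2 hx.2), one_mul]
  · refine (integrableOn_Ioi_rpow_of_lt (by linarith : σ - 2 < -1) one_pos).congr_fun
      (fun x hx => ?_) measurableSet_Ioi
    have hx0 : (0 : ℝ) < x := one_pos.trans hx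
    rw [min_eq_right (inv_le_one_of_one_le₀ (le_of_lt hx)), ← rpow_neg_one, ← rpow_add hx0]
    ring_nf

lemma integrableOn_rpow_mul_exp_neg_mul {σ a : ℝ} (hσ : 0 < σ) (ha : 0 < a) :
    IntegrableOn (fun x : ℝ => x ^ (σ - 1) * exp (-(a * x))) (Ioi 0) := by
  simpa [neg_mul] using
    integrableOn_rpow_mul_exp_neg_mul_rpow (by linarith : -1 < σ - 1) one_pos ha

lemma H_mul_rpow_mem_Icc {a σ x : ℝ} (ha : 0 ≤ a) (ha' : a ≤ 1) (hx : 0 < x) :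
    H a x * x ^ (σ - 1) ∈ Icc
      (x ^ (σ - 1) * exp (-(a * x)) - 2 * (min 1 x⁻¹ * x ^ (σ - 1)))
      (x ^ (σ - 1) * exp (-(a * x))) := by
  have hp : 0 ≤ x ^ (σ - 1) := rpow_nonneg hx.le _
  constructor
  · calc x ^ (σ - 1) * exp (-(a * x)) - 2 * (min 1 x⁻¹ * x ^ (σ - 1))
        = (exp (-(a * x)) - 2 * min 1 x⁻¹) * x ^ (σ - 1) := by ring
      _ ≤ H a x * x ^ (σ - 1) := mul_le_mul_of_nonneg_right (exp_neg_mul_sub_le_H ha ha' hx) hp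
  · rw [mul_comm]
    exact mul_le_mul_of_nonneg_left (H_le_exp_neg_mul ha hx) hp

section Integral

variable {σ a : ℝ}

lemma integrableOn_H_mul_rpow (hσ : 0 < σ) (hσ' : σ < 1) (ha : 0 < a) (ha' : a ≤ 1) :
    IntegrableOn (fun x => H a x * x ^ (σ - 1)) (Ioi 0) := by
  have hmeas : Measurable fun x => H a x * x ^ (σ - 1) := by unfold H; fun_prop
  exact integrable_of_le_of_le hmeas.aestronglyMeasurable
    (ae_restrict_of_forall_mem measurableSet_Ioi fun x hx => (H_mul_rpow_mem_Icc ha.le ha' hx).1)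
    (ae_restrict_of_forall_mem measurableSet_Ioi fun x hx => (H_mul_rpow_mem_Icc ha.le ha' hx).2)
    ((integrableOn_rpow_mul_exp_neg_mul hσ ha).sub
      ((integrableOn_min_one_inv_mul_rpow hσ hσ').const_mul 2))
    (integrableOn_rpow_mul_exp_neg_mul hσ ha)

lemma rpow_mul_Gamma_sub_le_integral_H_mul_rpow (hσ : 0 < σ) (hσ' : σ < 1) (ha : 0 < a)
    (ha' : a ≤ 1) :
    a⁻¹ ^ σ * Gamma σ - 2 * ∫ x in Ioi 0, min 1 x⁻¹ * x ^ (σ - 1) ≤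
      ∫ x in Ioi 0, H a x * x ^ (σ - 1) := by
  have hexp := integrableOn_rpow_mul_exp_neg_mul hσ ha
  have hmin := (integrableOn_min_one_inv_mul_rpow hσ hσ').const_mul 2
  calc a⁻¹ ^ σ * Gamma σ - 2 * ∫ x in Ioi 0, min 1 x⁻¹ * x ^ (σ - 1)
      = ∫ x in Ioi 0, (x ^ (σ - 1) * exp (-(a * x)) - 2 * (min 1 x⁻¹ * x ^ (σ - 1))) := by
        rw [integral_sub hexp hmin, integral_const_mul, integral_rpow_mul_exp_neg_mul_Ioi hσ ha,
          one_div]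
    _ ≤ ∫ x in Ioi 0, H a x * x ^ (σ - 1) :=
        setIntegral_mono_on (hexp.sub hmin) (integrableOn_H_mul_rpow hσ hσ' ha ha')
          measurableSet_Ioi fun x hx => (H_mul_rpow_mem_Icc ha.le ha' hx).1

end Integral

/-- For fixed `σ ∈ (0,1)`, `∫₀^∞ H(a,x) x^{σ-1} dx → +∞` as `a → 0⁺`. -/
theorem tendsto_integral_H_atTop (σ : ℝ) (hσ : 0 < σ) (hσ' : σ < 1) :
    Tendsto (fun a : ℝ => ∫ x in Set.Ioi (0 : ℝ), H a x * x ^ (σ - 1))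
      (nhdsWithin 0 (Set.Ioi 0)) atTop := by
  have hlower : Tendsto (fun a : ℝ => a⁻¹ ^ σ * Gamma σ -
      2 * ∫ x in Ioi 0, min 1 x⁻¹ * x ^ (σ - 1)) (nhdsWithin 0 (Ioi 0)) atTop :=
    tendsto_atTop_add_const_right _ _ <|
      ((tendsto_rpow_atTop hσ).comp tendsto_inv_nhdsGT_zero).atTop_mul_const
        (Gamma_pos_of_pos hσ)
  refine tendsto_atTop_mono' _ ?_ hlower
  filter_upwards [Ioc_mem_nhdsGT zero_lt_one] with a ha
  exact rpow_mul_Gamma_sub_le_integral_H_mul_rpow hσ hσ' ha.1 ha.2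
end
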